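/- Harish-Chandra's estimate for the basic spherical function of the hyperbolic plane: there exist constants c > 0 and d ∈ ℕ such that for all t ≥ 0, φ_0 evaluated at hyperbolic distance t from the origin satisfies φ_0(t) ≤ c (1 + t)^d e^{−t/2}; in fact one may take d = 1. -/

import Mathlib

open Complex Real MeasureTheory

/-- The Poisson kernel of the disk: `P(z,b) = (1 − |z|²)/|b − z|²`. -/
noncomputable def poissonKer (z b : ℂ) : ℝ :=
  (1 - ‖z‖ ^ 2) / ‖b - z‖ ^ 2

/-- The basic spherical function `φ₀` of the hyperbolic disk. -/
noncomputable def sphFn0 (z : ℂ) : ℂ :=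
  (1 / (2 * π)) * ∫ t in (0:ℝ)..(2 * π),
    ((poissonKer z (Complex.exp (Complex.I * t)) : ℂ)) ^ ((1 / 2 : ℂ))

/-!
On the unit circle `‖e^{iθ} - r‖² = (1 - r)² + 2r(1 - cos θ)`, and Jordan's inequality
`1 - cos θ ≥ 2θ²/π²` gives `‖e^{iθ} - r‖ ≥ ((1 - r) + dist(θ, 2πℤ)) / 6`. Hence the integrand
`√P(r, e^{iθ})` is at most `6√(1 - r²) / ((1 - r) + dist(θ, 2πℤ))`, whose integral over a period
is `O(√(1 - r²) log(1 + 2π/(1 - r)))`. At `r = tanh(t/2)` we have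
`√(1 - r²) = 1/cosh(t/2) ≤ 2e^{-t/2}` and `1/(1 - r) ≤ e^t`, so the logarithm is `O(1 + t)`.
-/
theorem norm_exp_I_mul_sub_ofReal_sq (r θ : ℝ) :
    ‖Complex.exp (I * θ) - r‖ ^ 2 = (1 - r) ^ 2 + 2 * r * (1 - Real.cos θ) := by
  rw [Complex.sq_norm, mul_comm, Complex.exp_mul_I, Complex.normSq_apply]
  simp only [← ofReal_cos, ← ofReal_sin, sub_re, add_re, sub_im, add_im, ofReal_re, ofReal_im,
    mul_re, mul_im, I_re, I_im]
  linear_combination Real.sin_sq_add_cos_sq θ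

theorem one_sub_add_abs_sq_le {r θ : ℝ} (hr0 : 0 ≤ r) (hr1 : r ≤ 1) (hθ : |θ| ≤ π) :
    (1 - r + |θ|) ^ 2 ≤ 36 * ((1 - r) ^ 2 + 2 * r * (1 - Real.cos θ)) := by
  have hπ := Real.pi_gt_three
  have hπ' := Real.pi_lt_d2
  have hjordan : |θ| ^ 2 ≤ π ^ 2 / 2 * (1 - Real.cos θ) := by
    have := Real.cos_le_one_sub_mul_cos_sq hθ
    calc |θ| ^ 2 = π ^ 2 / 2 * (2 / π ^ 2 * θ ^ 2) := by field_simp; rw [sq_abs]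
      _ ≤ π ^ 2 / 2 * (1 - Real.cos θ) := by gcongr; linarith
  have hcos : 0 ≤ 1 - Real.cos θ := by linarith [Real.cos_le_one θ]
  have hθ0 := abs_nonneg θ
  -- For `r ≥ 1/4` the cosine term controls `θ²`; otherwise `1 - r ≥ 3/4` controls `|θ| ≤ π`.
  rcases le_total (1 / 4) r with hr | hr
  · have hπsq : π ^ 2 < 10 := by nlinarith
    have : 1 - Real.cos θ ≤ 4 * r * (1 - Real.cos θ) := by nlinarith
    nlinarith [sq_nonneg (1 - r - |θ|)]
  · nlinarith

theorem one_sub_add_abs_le_norm_exp_I_mul_sub {r θ : ℝ} (hr0 : 0 ≤ r) (hr1 : r ≤ 1)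
    (hθ : |θ| ≤ π) : 1 - r + |θ| ≤ 6 * ‖Complex.exp (I * θ) - r‖ := by
  refine le_of_pow_le_pow_left₀ two_ne_zero (by positivity) ?_
  rw [mul_pow, norm_exp_I_mul_sub_ofReal_sq]
  linarith [one_sub_add_abs_sq_le hr0 hr1 hθ]

theorem norm_exp_I_mul_sub_ofReal_inv_le_of_abs_le {r θ : ℝ} (hr0 : 0 ≤ r) (hr1 : r < 1)
    (hθ : |θ| ≤ π) : ‖Complex.exp (I * θ) - r‖⁻¹ ≤ 6 * (1 - r + |θ|)⁻¹ := by
  have key := one_sub_add_abs_le_norm_exp_I_mul_sub hr0 hr1.le hθ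
  have hpos : 0 < 1 - r + |θ| := by positivity
  have hne : ‖Complex.exp (I * θ) - r‖ ≠ 0 := by linarith
  calc ‖Complex.exp (I * θ) - r‖⁻¹ = 6 * (6 * ‖Complex.exp (I * θ) - r‖)⁻¹ := by
        field_simp
    _ ≤ 6 * (1 - r + |θ|)⁻¹ := by gcongr

theorem norm_exp_I_mul_sub_ofReal_inv_le {r θ : ℝ} (hr0 : 0 ≤ r) (hr1 : r < 1)
    (hθ : θ ∈ Set.Icc 0 (2 * π)) :
    ‖Complex.exp (I * θ) - r‖⁻¹ ≤ 6 * ((1 - r + θ)⁻¹ + (1 - r + (2 * π - θ))⁻¹) := by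
  obtain ⟨hθ0, hθ2π⟩ := hθ
  have hπ := Real.pi_pos
  have h₁ : 0 ≤ (1 - r + θ)⁻¹ := by positivity
  have h₂ : 0 ≤ (1 - r + (2 * π - θ))⁻¹ := by positivity
  rcases le_total θ π with h | h
  · have := norm_exp_I_mul_sub_ofReal_inv_le_of_abs_le hr0 hr1 (abs_le.2 ⟨by linarith, h⟩)
    rw [abs_of_nonneg hθ0] at this
    linarith
  · have := norm_exp_I_mul_sub_ofReal_inv_le_of_abs_le hr0 hr1
      (θ := θ - 2 * π) (abs_le.2 ⟨by linarith, by linarith⟩)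
    rw [abs_of_nonpos (by linarith), neg_sub,
      show I * ((θ - 2 * π : ℝ) : ℂ) = I * θ - 2 * π * I by push_cast; ring,
      Complex.exp_periodic.sub_eq] at this
    linarith

theorem poissonKer_nonneg {z : ℂ} (hz : ‖z‖ ≤ 1) (b : ℂ) : 0 ≤ poissonKer z b := by
  unfold poissonKer
  have : ‖z‖ ^ 2 ≤ 1 := pow_le_one₀ (norm_nonneg z) hz
  exact div_nonneg (by linarith) (sq_nonneg _)

theorem norm_poissonKer_cpow_half {z : ℂ} (hz : ‖z‖ ≤ 1) (b : ℂ) :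
    ‖(poissonKer z b : ℂ) ^ (1 / 2 : ℂ)‖ = √(1 - ‖z‖ ^ 2) / ‖b - z‖ := by
  rw [norm_cpow_eq_rpow_re_of_nonneg (poissonKer_nonneg hz b) (by norm_num),
    show (1 / 2 : ℂ).re = 1 / 2 by norm_num, ← Real.sqrt_eq_rpow,
    poissonKer, Real.sqrt_div' _ (sq_nonneg _), Real.sqrt_sq (norm_nonneg _)]

section InverseIntegrals

variable {a L : ℝ}

theorem intervalIntegrable_inv_add (ha : 0 < a) (hL : 0 ≤ L) :
    IntervalIntegrable (fun θ => (a + θ)⁻¹) volume 0 L := by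
  refine intervalIntegral.intervalIntegrable_inv (fun x hx => ?_) (by fun_prop)
  rw [Set.uIcc_of_le hL] at hx
  linarith [hx.1]

theorem intervalIntegrable_inv_add_sub (ha : 0 < a) (hL : 0 ≤ L) :
    IntervalIntegrable (fun θ => (a + (L - θ))⁻¹) volume 0 L := by
  simpa using ((intervalIntegrable_inv_add ha hL).comp_sub_left L).symm

theorem integral_inv_add_add_inv_add_sub (ha : 0 < a) (hL : 0 ≤ L) :
    ∫ θ in (0 : ℝ)..L, ((a + θ)⁻¹ + (a + (L - θ))⁻¹) = 2 * Real.log ((a + L) / a) := by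
  have hint : ∫ θ in (0 : ℝ)..L, (a + θ)⁻¹ = Real.log ((a + L) / a) := by
    rw [intervalIntegral.integral_comp_add_left (fun x => x⁻¹), add_zero,
      integral_inv_of_pos ha (by linarith)]
  rw [intervalIntegral.integral_add (intervalIntegrable_inv_add ha hL)
    (intervalIntegrable_inv_add_sub ha hL), hint,
    intervalIntegral.integral_comp_sub_left (fun x => (a + x)⁻¹), sub_self, sub_zero, hint]
  ring

end InverseIntegrals

theorem norm_sphFn0_ofReal_le {r : ℝ} (hr0 : 0 ≤ r) (hr1 : r < 1) :
    ‖sphFn0 r‖ ≤ 2 * √(1 - r ^ 2) * Real.log ((1 - r + 2 * π) / (1 - r)) := by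
  have hπ := Real.pi_gt_three
  have ha : 0 < 1 - r := by linarith
  have hr : ‖(r : ℂ)‖ = r := by rw [norm_real, Real.norm_of_nonneg hr0]
  have hbound : ∀ θ ∈ Set.Ioc 0 (2 * π),
      ‖(poissonKer r (Complex.exp (I * θ)) : ℂ) ^ (1 / 2 : ℂ)‖ ≤
        6 * √(1 - r ^ 2) * ((1 - r + θ)⁻¹ + (1 - r + (2 * π - θ))⁻¹) := fun θ hθ => by
    rw [norm_poissonKer_cpow_half (by rw [hr]; exact hr1.le), hr, div_eq_mul_inv, mul_comm 6,
      mul_assoc]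
    gcongr
    exact norm_exp_I_mul_sub_ofReal_inv_le hr0 hr1 (Set.Ioc_subset_Icc_self hθ)
  have hint := intervalIntegral.norm_integral_le_of_norm_le (μ := volume) (by positivity)
    (Filter.Eventually.of_forall hbound)
    (((intervalIntegrable_inv_add ha (by positivity)).add
      (intervalIntegrable_inv_add_sub ha (by positivity))).const_mul _)
  rw [intervalIntegral.integral_const_mul,
    integral_inv_add_add_inv_add_sub ha (by positivity)] at hint
  have hlog : 0 ≤ Real.log ((1 - r + 2 * π) / (1 - r)) :=
    Real.log_nonneg ((one_le_div ha).2 (by linarith))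
  have hnorm : ‖(1 / (2 * π) : ℂ)‖ = 1 / (2 * π) := by
    rw [norm_div, norm_one, norm_mul, norm_real, Real.norm_of_nonneg Real.pi_pos.le]
    norm_num
  rw [sphFn0, norm_mul, hnorm]
  calc 1 / (2 * π) * ‖_‖
      ≤ 1 / (2 * π) * (6 * √(1 - r ^ 2) * (2 * Real.log ((1 - r + 2 * π) / (1 - r)))) := by
        gcongr
    _ = 6 / π * (√(1 - r ^ 2) * Real.log ((1 - r + 2 * π) / (1 - r))) := by
        field_simp
    _ ≤ 2 * √(1 - r ^ 2) * Real.log ((1 - r + 2 * π) / (1 - r)) := by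
        rw [mul_assoc]
        gcongr
        rw [div_le_iff₀ (by positivity)]
        linarith

theorem Real.tanh_nonneg {x : ℝ} (hx : 0 ≤ x) : 0 ≤ Real.tanh x := by
  rw [Real.tanh_eq_sinh_div_cosh]
  exact div_nonneg (Real.sinh_nonneg_iff.2 hx) (Real.cosh_pos x).le

theorem Real.exp_le_two_mul_cosh (x : ℝ) : Real.exp x ≤ 2 * Real.cosh x := by
  rw [Real.cosh_eq]
  linarith [Real.exp_pos (-x)]

theorem Real.sqrt_one_sub_tanh_sq_le (x : ℝ) :
    √(1 - Real.tanh x ^ 2) ≤ 2 * Real.exp (-x) := by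
  have hc := Real.cosh_pos x
  have hsq : 1 - Real.tanh x ^ 2 = (Real.cosh x)⁻¹ ^ 2 := by
    rw [Real.tanh_eq_sinh_div_cosh]
    field_simp
    linear_combination Real.cosh_sq x
  rw [hsq, Real.sqrt_sq (by positivity)]
  calc (Real.cosh x)⁻¹ ≤ (Real.exp x / 2)⁻¹ :=
        inv_anti₀ (by positivity) (by linarith [Real.exp_le_two_mul_cosh x])
    _ = 2 * Real.exp (-x) := by rw [Real.exp_neg, inv_div, div_eq_mul_inv]

theorem Real.inv_one_sub_tanh_le {x : ℝ} (hx : 0 ≤ x) :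
    (1 - Real.tanh x)⁻¹ ≤ Real.exp (2 * x) := by
  have hc := Real.cosh_pos x
  have : 1 - Real.tanh x = Real.exp (-x) / Real.cosh x := by
    rw [Real.tanh_eq_sinh_div_cosh, ← Real.cosh_sub_sinh]
    field_simp
  rw [this, inv_div, Real.exp_neg, div_inv_eq_mul, two_mul, Real.exp_add]
  gcongr
  rw [Real.cosh_eq]
  linarith [Real.exp_le_exp.2 (show -x ≤ x by linarith)]

/-- Harish-Chandra's estimate for the basic spherical function of the
hyperbolic plane: there is a constant `c > 0` such that for all `t ≥ 0`,
the value of `φ₀` at the point `tanh(t/2)` (at hyperbolic distance `t` from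
the origin) satisfies `φ₀(t) ≤ c (1 + t)^d e^{−t/2}` with `d = 1`. -/
theorem sphFn0_harish_chandra_estimate :
    ∃ c : ℝ, 0 < c ∧ ∀ t : ℝ, 0 ≤ t →
      ‖sphFn0 ((Real.tanh (t / 2) : ℝ) : ℂ)‖ ≤
        c * (1 + t) ^ (1 : ℕ) * Real.exp (-t / 2) := by
  refine ⟨8 * π, by positivity, fun t ht => ?_⟩
  set r := Real.tanh (t / 2)
  have hr1 : r < 1 := Real.tanh_lt_one _
  have ha : 0 < 1 - r := by linarith
  have hsqrt : √(1 - r ^ 2) ≤ 2 * Real.exp (-t / 2) := by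
    simpa [neg_div] using Real.sqrt_one_sub_tanh_sq_le (t / 2)
  have hinv : (1 - r)⁻¹ ≤ Real.exp t := by
    have := Real.inv_one_sub_tanh_le (x := t / 2) (by positivity)
    rwa [show 2 * (t / 2) = t by ring] at this
  have hlog : Real.log ((1 - r + 2 * π) / (1 - r)) ≤ 2 * π * (1 + t) := by
    have hπ := Real.pi_pos
    have h1 : (1 - r + 2 * π) / (1 - r) ≤ (1 + 2 * π) * Real.exp t := by
      rw [add_div, div_self ha.ne', div_eq_mul_inv]
      nlinarith [Real.one_le_exp ht]
    calc Real.log ((1 - r + 2 * π) / (1 - r))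
        ≤ Real.log ((1 + 2 * π) * Real.exp t) := Real.log_le_log (by positivity) h1
      _ = Real.log (1 + 2 * π) + t := by
        rw [Real.log_mul (by positivity) (by positivity), Real.log_exp]
      _ ≤ 2 * π * (1 + t) := by
        have := Real.log_le_sub_one_of_pos (show 0 < 1 + 2 * π by positivity)
        nlinarith [Real.pi_gt_three]
  calc ‖sphFn0 r‖ ≤ 2 * √(1 - r ^ 2) * Real.log ((1 - r + 2 * π) / (1 - r)) :=
        norm_sphFn0_ofReal_le (Real.tanh_nonneg (by positivity)) hr1
    _ ≤ 2 * (2 * Real.exp (-t / 2)) * (2 * π * (1 + t)) := by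
        gcongr
        exact Real.log_nonneg ((one_le_div ha).2 (by linarith [Real.pi_pos]))
    _ = 8 * π * (1 + t) ^ (1 : ℕ) * Real.exp (-t / 2) := by ring
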